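/- Fix integers p ≥ 1 and n ≥ 1, a point θ₀ ∈ ℝ^p, vectors g_1,…,g_n ∈ ℝ^p, rewards r_1,…,r_n ∈ ℝ, and reals λ > 0, m > 0. Let b : ℝ → ℝ be twice differentiable with constants 0 < L_b ≤ 1 ≤ U_b satisfying L_b ≤ b''(z) ≤ U_b for all z ∈ ℝ. Define ℓ_λ(θ) := ∑_{s=1}^n ( r_s·⟨g_s, θ − θ₀⟩ − b(⟨g_s, θ − θ₀⟩) ) − (m·λ/2)·‖θ − θ₀‖₂² and Z̄ := λ·I + (1/m)·∑_{s=1}^n g_s g_sᵀ. Let α ≥ 0, let g_i, g_j ∈ ℝ^p, and let θ_i and θ_j be global maximizers over ℝ^p of θ ↦ ℓ_λ(θ) + α·⟨g_i, θ − θ₀⟩ and θ ↦ ℓ_λ(θ) + α·⟨g_j, θ − θ₀⟩ respectively. Then ℓ_λ(θ_i) − ℓ_λ(θ_j) ≤ ( U_b·α² / (m·L_b²) ) · ‖g_j‖²_{Z̄⁻¹}. -/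

import Mathlib

/-! ℓ_λ is strongly concave with respect to ‖·‖_{Z̄}: at the midpoint μ of θ_i and θ_j its value
exceeds the average of the endpoint values by (L_b m / 8)‖θ_i − θ_j‖²_{Z̄} (strong convexity of `b`
for the data term, the parallelogram law for the ridge term, and L_b ≤ 1 to merge the two).
Testing the optimality of θ_j against μ then gives
ℓ_λ(θ_i) − ℓ_λ(θ_j) ≤ α⟨g_j, θ_j − θ_i⟩ − (L_b m / 4)‖θ_i − θ_j‖²_{Z̄},
and completing the square in θ_i − θ_j bounds the right-hand side by
α²‖g_j‖²_{Z̄⁻¹} / (L_b m) ≤ U_b α²‖g_j‖²_{Z̄⁻¹} / (m L_b²). -/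

open Matrix

/-- The regularized exponential-family surrogate log-likelihood
ℓ_λ(θ) = ∑_s ( r_s·⟨g_s, θ−θ₀⟩ − b(⟨g_s, θ−θ₀⟩) ) − (mλ/2)·‖θ−θ₀‖₂². -/
noncomputable def ellLam {p n : ℕ} (θ₀ : Fin p → ℝ) (g : Fin n → Fin p → ℝ)
    (r : Fin n → ℝ) (b : ℝ → ℝ) (lam m : ℝ) (θ : Fin p → ℝ) : ℝ :=
  (∑ s, (r s * (g s ⬝ᵥ (θ - θ₀)) - b (g s ⬝ᵥ (θ - θ₀))))
    - m * lam / 2 * (∑ i, (θ i - θ₀ i) ^ 2)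

/-- The regularized Gram matrix Z̄ = λ·I + (1/m)·∑_s g_s g_sᵀ. -/
noncomputable def gramMat {p n : ℕ} (g : Fin n → Fin p → ℝ) (lam m : ℝ) :
    Matrix (Fin p) (Fin p) ℝ :=
  lam • (1 : Matrix (Fin p) (Fin p) ℝ) + (1 / m) • ∑ s, vecMulVec (g s) (g s)

theorem strongConvexOn_univ_of_le_deriv2 {f : ℝ → ℝ} {κ : ℝ} (hf : Differentiable ℝ f)
    (hf' : Differentiable ℝ (deriv f)) (hκ : ∀ x, κ ≤ deriv (deriv f) x) :
    StrongConvexOn Set.univ κ f := by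
  have hq : ∀ x : ℝ, HasDerivAt (fun x : ℝ ↦ κ / 2 * x ^ 2) (κ * x) x := fun x ↦
    ((hasDerivAt_pow 2 x).const_mul (κ / 2)).congr_deriv (by ring)
  have hderiv : deriv (fun x ↦ f x - κ / 2 * x ^ 2) = fun x ↦ deriv f x - κ * x :=
    funext fun x ↦ ((hf x).hasDerivAt.fun_sub (hq x)).deriv
  have hderiv2 : ∀ x, deriv (fun x ↦ deriv f x - κ * x) x = deriv (deriv f) x - κ := fun x ↦
    ((hf' x).hasDerivAt.fun_sub ((hasDerivAt_id x).const_mul κ)).deriv.trans (by simp)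
  rw [strongConvexOn_iff_convex]
  simp only [Real.norm_eq_abs, sq_abs]
  refine convexOn_univ_of_deriv2_nonneg (hf.sub fun x ↦ (hq x).differentiableAt) ?_ fun x ↦ ?_
  · rw [hderiv]; fun_prop
  · simp only [Function.iterate_succ, Function.iterate_zero, Function.comp_apply, hderiv,
      hderiv2, id, sub_nonneg, hκ]

theorem StrongConvexOn.map_midpoint_le {E : Type*} [NormedAddCommGroup E] [NormedSpace ℝ E]
    {s : Set E} {κ : ℝ} {f : E → ℝ} (hf : StrongConvexOn s κ f) {x y : E} (hx : x ∈ s)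
    (hy : y ∈ s) : f (midpoint ℝ x y) ≤ (f x + f y) / 2 - κ / 8 * ‖x - y‖ ^ 2 := by
  have := hf.2 hx hy (by norm_num : (0 : ℝ) ≤ 2⁻¹) (by norm_num : (0 : ℝ) ≤ 2⁻¹) (by norm_num)
  rw [midpoint_eq_smul_add, invOf_eq_inv, smul_add]
  simp only [smul_eq_mul] at this
  linarith

theorem Matrix.PosDef.mul_dotProduct_sub_le {ι : Type*} [Fintype ι] [DecidableEq ι]
    {Z : Matrix ι ι ℝ} (hZ : Z.PosDef) {c : ℝ} (hc : 0 < c) (a : ℝ) (v x : ι → ℝ) :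
    a * (v ⬝ᵥ x) - c * (x ⬝ᵥ Z *ᵥ x) ≤ a ^ 2 / (4 * c) * (v ⬝ᵥ Z⁻¹ *ᵥ v) := by
  set w := Z⁻¹ *ᵥ v
  have hZw : Z *ᵥ w = v := by
    rw [mulVec_mulVec, mul_nonsing_inv _ hZ.det_pos.ne'.isUnit, one_mulVec]
  have hsymm : w ⬝ᵥ Z *ᵥ x = v ⬝ᵥ x := by
    rw [dotProduct_mulVec, ← mulVec_transpose, ← conjTranspose_eq_transpose_of_trivial,
      hZ.isHermitian.eq, hZw]
  have hsq := hZ.posSemidef.dotProduct_mulVec_nonneg (x - (a / (2 * c)) • w)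
  simp only [star_trivial, mulVec_sub, mulVec_smul, hZw, sub_dotProduct, dotProduct_sub,
    smul_dotProduct, dotProduct_smul, smul_eq_mul, hsymm, dotProduct_comm x v,
    dotProduct_comm w v] at hsq
  have hexpand : c * (x ⬝ᵥ Z *ᵥ x - a / (2 * c) * v ⬝ᵥ x
        - a / (2 * c) * (v ⬝ᵥ x - a / (2 * c) * v ⬝ᵥ w))
      = c * (x ⬝ᵥ Z *ᵥ x) - a * (v ⬝ᵥ x) + a ^ 2 / (4 * c) * (v ⬝ᵥ w) := by
    field_simp; ring
  linarith [mul_nonneg hc.le hsq]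

section GramMatrix

variable {p n : ℕ} (g : Fin n → Fin p → ℝ)

theorem dotProduct_gramMat_mulVec (lam m : ℝ) (x : Fin p → ℝ) :
    x ⬝ᵥ gramMat g lam m *ᵥ x = lam * ∑ i, x i ^ 2 + 1 / m * ∑ s, (g s ⬝ᵥ x) ^ 2 := by
  simp only [gramMat, add_mulVec, smul_mulVec, one_mulVec, sum_mulVec, vecMulVec_mulVec,
    dotProduct_add, dotProduct_smul, dotProduct_sum, smul_eq_mul, op_smul_eq_mul]
  simp [dotProduct, sq, mul_comm]

theorem posDef_gramMat {lam m : ℝ} (hlam : 0 < lam) (hm : 0 ≤ m) : (gramMat g lam m).PosDef :=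
  (PosDef.one.smul hlam).add_posSemidef <| PosSemidef.smul
    (posSemidef_sum _ fun s _ ↦ by simpa using posSemidef_vecMulVec_self_star (g s))
    (by positivity)

end GramMatrix

section Likelihood

variable {p n : ℕ} (θ₀ : Fin p → ℝ) (g : Fin n → Fin p → ℝ) (r : Fin n → ℝ) {b : ℝ → ℝ}
  {Lb : ℝ}

theorem le_ellLam_midpoint (hb : StrongConvexOn Set.univ Lb b) (lam m : ℝ) (θ θ' : Fin p → ℝ) :
    (ellLam θ₀ g r b lam m θ + ellLam θ₀ g r b lam m θ') / 2
        + Lb / 8 * ∑ s, (g s ⬝ᵥ (θ - θ')) ^ 2 + m * lam / 8 * ∑ i, (θ i - θ' i) ^ 2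
      ≤ ellLam θ₀ g r b lam m (midpoint ℝ θ θ') := by
  have hmid : midpoint ℝ θ θ' - θ₀ = midpoint ℝ (θ - θ₀) (θ' - θ₀) := by
    simp only [midpoint_eq_smul_add, invOf_eq_inv]; module
  have hdiff : θ - θ' = (θ - θ₀) - (θ' - θ₀) := by abel
  have hdata : ∀ s, (r s * (g s ⬝ᵥ (θ - θ₀)) - b (g s ⬝ᵥ (θ - θ₀))
        + (r s * (g s ⬝ᵥ (θ' - θ₀)) - b (g s ⬝ᵥ (θ' - θ₀)))) / 2 + Lb / 8 * (g s ⬝ᵥ (θ - θ')) ^ 2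
      ≤ r s * (g s ⬝ᵥ (midpoint ℝ θ θ' - θ₀)) - b (g s ⬝ᵥ (midpoint ℝ θ θ' - θ₀)) := by
    intro s
    set x := g s ⬝ᵥ (θ - θ₀)
    set x' := g s ⬝ᵥ (θ' - θ₀)
    have hlin : g s ⬝ᵥ (midpoint ℝ θ θ' - θ₀) = midpoint ℝ x x' := by
      rw [hmid, midpoint_eq_smul_add, midpoint_eq_smul_add, dotProduct_smul, dotProduct_add]
    have hr : r s * midpoint ℝ x x' = (r s * x + r s * x') / 2 := by
      rw [midpoint_eq_smul_add, invOf_eq_inv, smul_eq_mul]; ring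
    have hb_s := hb.map_midpoint_le (Set.mem_univ x) (Set.mem_univ x')
    rw [Real.norm_eq_abs, sq_abs, ← dotProduct_sub, ← hdiff] at hb_s
    rw [hlin, hr]
    linarith
  have hreg : ∀ i, (midpoint ℝ θ θ' i - θ₀ i) ^ 2
      = ((θ i - θ₀ i) ^ 2 + (θ' i - θ₀ i) ^ 2) / 2 - (θ i - θ' i) ^ 2 / 4 := by
    intro i
    simp only [midpoint_eq_smul_add, invOf_eq_inv, Pi.smul_apply, Pi.add_apply, smul_eq_mul]
    ring
  have hsum := Finset.sum_le_sum fun s (_ : s ∈ Finset.univ) ↦ hdata s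
  simp only [ellLam, hreg, Finset.sum_sub_distrib, Finset.sum_add_distrib, ← Finset.sum_div,
    ← Finset.mul_sum] at hsum ⊢
  linarith

theorem le_ellLam_midpoint_gramMat (hb : StrongConvexOn Set.univ Lb b) (hLb1 : Lb ≤ 1)
    {lam m : ℝ} (hlam : 0 ≤ lam) (hm : 0 < m) (θ θ' : Fin p → ℝ) :
    (ellLam θ₀ g r b lam m θ + ellLam θ₀ g r b lam m θ') / 2
        + Lb * m / 8 * ((θ - θ') ⬝ᵥ gramMat g lam m *ᵥ (θ - θ'))
      ≤ ellLam θ₀ g r b lam m (midpoint ℝ θ θ') := by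
  have hmid := le_ellLam_midpoint θ₀ g r hb lam m θ θ'
  have hreg : 0 ≤ (1 - Lb) * (m * lam * ∑ i, (θ i - θ' i) ^ 2) := by
    have := sub_nonneg.mpr hLb1
    positivity
  have hZ : Lb * m / 8 * ((θ - θ') ⬝ᵥ gramMat g lam m *ᵥ (θ - θ'))
      = Lb * (m * lam) / 8 * ∑ i, (θ i - θ' i) ^ 2 + Lb / 8 * ∑ s, (g s ⬝ᵥ (θ - θ')) ^ 2 := by
    simp only [dotProduct_gramMat_mulVec, Pi.sub_apply]
    field_simp
  linarith

end Likelihood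

theorem stmt8_general {p n : ℕ}
    (θ₀ : Fin p → ℝ) (g : Fin n → Fin p → ℝ) (r : Fin n → ℝ)
    (lam m : ℝ) (hlam : 0 < lam) (hm : 0 < m)
    (b : ℝ → ℝ) (Lb Ub : ℝ) (hLb : 0 < Lb) (hLb1 : Lb ≤ 1) (hUb : 1 ≤ Ub)
    (hb : Differentiable ℝ b) (hb' : Differentiable ℝ (deriv b))
    (hlow : ∀ z : ℝ, Lb ≤ deriv (deriv b) z)
    (α : ℝ) (gj : Fin p → ℝ)
    (θi : Fin p → ℝ)
    (θj : Fin p → ℝ)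
    (hθj : ∀ θ : Fin p → ℝ, ellLam θ₀ g r b lam m θ + α * (gj ⬝ᵥ (θ - θ₀)) ≤
        ellLam θ₀ g r b lam m θj + α * (gj ⬝ᵥ (θj - θ₀))) :
    ellLam θ₀ g r b lam m θi - ellLam θ₀ g r b lam m θj ≤
      Ub * α ^ 2 / (m * Lb ^ 2) * (gj ⬝ᵥ (gramMat g lam m)⁻¹.mulVec gj) := by
  have hZ := posDef_gramMat g hlam hm.le
  have hmid := le_ellLam_midpoint_gramMat θ₀ g r (strongConvexOn_univ_of_le_deriv2 hb hb' hlow)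
    hLb1 hlam.le hm θi θj
  have hopt := hθj (midpoint ℝ θi θj)
  have hhalf : θj - θ₀ - (midpoint ℝ θi θj - θ₀) = (-2⁻¹ : ℝ) • (θi - θj) := by
    simp only [midpoint_eq_smul_add, invOf_eq_inv]
    module
  have hstep : α * (gj ⬝ᵥ (θj - θ₀)) - α * (gj ⬝ᵥ (midpoint ℝ θi θj - θ₀))
      = -α * (gj ⬝ᵥ (θi - θj)) / 2 := by
    rw [← mul_sub, ← dotProduct_sub, hhalf, dotProduct_smul, smul_eq_mul]
    ring
  have hsq := hZ.mul_dotProduct_sub_le (c := Lb * m / 4) (by positivity) (-α) gj (θi - θj)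
  have hconst : (-α) ^ 2 / (4 * (Lb * m / 4)) = Lb * α ^ 2 / (m * Lb ^ 2) := by
    field_simp
  have hS : 0 ≤ gj ⬝ᵥ (gramMat g lam m)⁻¹ *ᵥ gj := by
    simpa using hZ.inv.posSemidef.dotProduct_mulVec_nonneg gj
  calc ellLam θ₀ g r b lam m θi - ellLam θ₀ g r b lam m θj
      ≤ -α * (gj ⬝ᵥ (θi - θj)) - Lb * m / 4 * ((θi - θj) ⬝ᵥ gramMat g lam m *ᵥ (θi - θj)) := by
        linarith
    _ ≤ Lb * α ^ 2 / (m * Lb ^ 2) * (gj ⬝ᵥ (gramMat g lam m)⁻¹ *ᵥ gj) := hconst ▸ hsq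
    _ ≤ Ub * α ^ 2 / (m * Lb ^ 2) * (gj ⬝ᵥ (gramMat g lam m)⁻¹.mulVec gj) := by
        gcongr
        linarith

/-- ℓ_λ(θ_i) − ℓ_λ(θ_j) ≤ (U_b·α²/(m·L_b²))·‖g_j‖²_{Z̄⁻¹}, where θ_i and θ_j
are the RBMLE estimates for arm features g_i and g_j respectively. -/
theorem stmt8 {p n : ℕ} (hp : 1 ≤ p) (hn : 1 ≤ n)
    (θ₀ : Fin p → ℝ) (g : Fin n → Fin p → ℝ) (r : Fin n → ℝ)
    (lam m : ℝ) (hlam : 0 < lam) (hm : 0 < m)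
    (b : ℝ → ℝ) (Lb Ub : ℝ) (hLb : 0 < Lb) (hLb1 : Lb ≤ 1) (hUb : 1 ≤ Ub)
    (hb : Differentiable ℝ b) (hb' : Differentiable ℝ (deriv b))
    (hlow : ∀ z : ℝ, Lb ≤ deriv (deriv b) z) (hup : ∀ z : ℝ, deriv (deriv b) z ≤ Ub)
    (α : ℝ) (hα : 0 ≤ α) (gi gj : Fin p → ℝ)
    (θi : Fin p → ℝ)
    (hθi : ∀ θ : Fin p → ℝ, ellLam θ₀ g r b lam m θ + α * (gi ⬝ᵥ (θ - θ₀)) ≤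
        ellLam θ₀ g r b lam m θi + α * (gi ⬝ᵥ (θi - θ₀)))
    (θj : Fin p → ℝ)
    (hθj : ∀ θ : Fin p → ℝ, ellLam θ₀ g r b lam m θ + α * (gj ⬝ᵥ (θ - θ₀)) ≤
        ellLam θ₀ g r b lam m θj + α * (gj ⬝ᵥ (θj - θ₀))) :
    ellLam θ₀ g r b lam m θi - ellLam θ₀ g r b lam m θj ≤
      Ub * α ^ 2 / (m * Lb ^ 2) * (gj ⬝ᵥ (gramMat g lam m)⁻¹.mulVec gj) :=
  stmt8_general θ₀ g r lam m hlam hm b Lb Ub hLb hLb1 hUb hb hb' hlow α gj θi θj hθj
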